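/- arXiv:2306.14615 — 5 statements merged into one kernel-verified Lean document; each statement's English description precedes it below -/
import Mathlib

section
/- For fixed δ > 0 and Ψ > 0, the infimum over γ ∈ (0,δ) of 1/δ + δ(1+γΨ)/(γ(δ−γ)) equals 1/δ + δΨ²√(1+δΨ) / (δΨ(√(1+δΨ)−2) + 2(√(1+δΨ)−1)); for Ψ = 0 this infimum equals 5/δ. -/
/-! With `s = √(1 + δΨ)`, so that `δΨ = s² - 1`, one has the sum-of-squares identity
`δ²(1 + γΨ) = (1 + s)² γ(δ - γ) + (δ - (1 + s)γ)²`. Hence `g γ ≥ 1/δ + (1 + s)²/δ` on `(0, δ)`,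
with equality at `γ* = δ/(1 + s)`, which is `(s - 1)/Ψ` for `Ψ > 0` and `δ/2` for `Ψ = 0`.
Both closed forms of the infimum are this value rewritten. -/

open Set Real

namespace ReflectedConstant

noncomputable def g (δ Ψ γ : ℝ) : ℝ := 1 / δ + δ * (1 + γ * Ψ) / (γ * (δ - γ))

variable {δ Ψ s γ : ℝ}

lemma sq_mul_add_sq_eq (hs : s ^ 2 = 1 + δ * Ψ) :
    (1 + s) ^ 2 * (γ * (δ - γ)) + (δ - (1 + s) * γ) ^ 2 = δ ^ 2 * (1 + γ * Ψ) := by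
  linear_combination γ * δ * hs

lemma le_g (hδ : 0 < δ) (hs : s ^ 2 = 1 + δ * Ψ) (hγ : γ ∈ Ioo 0 δ) :
    1 / δ + (1 + s) ^ 2 / δ ≤ g δ Ψ γ := by
  have hprod : 0 < γ * (δ - γ) := mul_pos hγ.1 (sub_pos.2 hγ.2)
  rw [g, add_le_add_iff_left, div_le_div_iff₀ hδ hprod]
  nlinarith [sq_mul_add_sq_eq (γ := γ) hs, sq_nonneg (δ - (1 + s) * γ)]

lemma g_div_one_add (hδ : 0 < δ) (hs : 0 < s) (hs2 : s ^ 2 = 1 + δ * Ψ) :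
    g δ Ψ (δ / (1 + s)) = 1 / δ + (1 + s) ^ 2 / δ := by
  have hγ : δ - (1 + s) * (δ / (1 + s)) = 0 := by field_simp; ring
  have key := sq_mul_add_sq_eq (γ := δ / (1 + s)) hs2
  rw [hγ] at key
  have hprod : δ / (1 + s) * (δ - δ / (1 + s)) ≠ 0 := by
    have : δ - δ / (1 + s) = δ * s / (1 + s) := by field_simp; ring
    rw [this]; positivity
  rw [g, add_right_inj, div_eq_div_iff hprod hδ.ne']
  linear_combination -key

lemma isLeast_g (hδ : 0 < δ) (hΨ : 0 < 1 + δ * Ψ) :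
    IsLeast (g δ Ψ '' Ioo 0 δ) (1 / δ + (1 + √(1 + δ * Ψ)) ^ 2 / δ) := by
  have hs : 0 < √(1 + δ * Ψ) := sqrt_pos.2 hΨ
  have hs2 : √(1 + δ * Ψ) ^ 2 = 1 + δ * Ψ := sq_sqrt hΨ.le
  refine ⟨⟨δ / (1 + √(1 + δ * Ψ)), ⟨by positivity, ?_⟩, g_div_one_add hδ hs hs2⟩, ?_⟩
  · exact div_lt_self hδ (by linarith)
  · rintro _ ⟨γ, hγ, rfl⟩
    exact le_g hδ hs2 hγ

lemma one_add_sqrt_sq_div_eq (hδ : 0 < δ) (hΨ : 0 < Ψ) :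
    (1 + √(1 + δ * Ψ)) ^ 2 / δ =
      δ * Ψ ^ 2 * √(1 + δ * Ψ) / (δ * Ψ * (√(1 + δ * Ψ) - 2) + 2 * (√(1 + δ * Ψ) - 1)) := by
  set s := √(1 + δ * Ψ)
  have hs2 : s ^ 2 = 1 + δ * Ψ := sq_sqrt (by positivity)
  have hs1 : 1 < s := by nlinarith [sqrt_nonneg (1 + δ * Ψ), mul_pos hδ hΨ]
  have hden : δ * Ψ * (s - 2) + 2 * (s - 1) = s * (s - 1) ^ 2 := by
    linear_combination (2 - s) * hs2
  have hpos : 0 < s * (s - 1) ^ 2 := by have := sub_pos.2 hs1; positivity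
  rw [hden, div_eq_div_iff hδ.ne' hpos.ne']
  linear_combination s * (s ^ 2 - 1 + δ * Ψ) * hs2

end ReflectedConstant

open ReflectedConstant in
theorem inf_of_reflected_constant_g_general (δ Ψ : ℝ) (hδ : 0 < δ) :
    (0 < Ψ →
      sInf ((fun γ : ℝ => 1 / δ + δ * (1 + γ * Ψ) / (γ * (δ - γ))) '' Set.Ioo 0 δ) =
        1 / δ + δ * Ψ ^ 2 * Real.sqrt (1 + δ * Ψ) /
          (δ * Ψ * (Real.sqrt (1 + δ * Ψ) - 2) + 2 * (Real.sqrt (1 + δ * Ψ) - 1))) ∧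
    (Ψ = 0 →
      sInf ((fun γ : ℝ => 1 / δ + δ * (1 + γ * Ψ) / (γ * (δ - γ))) '' Set.Ioo 0 δ) =
        5 / δ) := by
  constructor
  · intro hΨ
    have hpos : 0 < 1 + δ * Ψ := by positivity
    exact (isLeast_g hδ hpos).csInf_eq.trans (by rw [one_add_sqrt_sq_div_eq hδ hΨ])
  · rintro rfl
    have hpos : (0 : ℝ) < 1 + δ * 0 := by simp
    refine (isLeast_g hδ hpos).csInf_eq.trans ?_
    rw [mul_zero, add_zero, sqrt_one]
    ring

/-- For fixed `δ > 0` and `Ψ > 0`, the infimum over `γ ∈ (0,δ)` of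
`1/δ + δ(1+γΨ)/(γ(δ-γ))` equals
`1/δ + δΨ²√(1+δΨ)/(δΨ(√(1+δΨ)-2) + 2(√(1+δΨ)-1))`;
for `Ψ = 0` this infimum equals `5/δ`. -/
theorem inf_of_reflected_constant_g (δ Ψ : ℝ) (hδ : 0 < δ) (hΨ : 0 ≤ Ψ) :
    (0 < Ψ →
      sInf ((fun γ : ℝ => 1 / δ + δ * (1 + γ * Ψ) / (γ * (δ - γ))) '' Set.Ioo 0 δ) =
        1 / δ + δ * Ψ ^ 2 * Real.sqrt (1 + δ * Ψ) /
          (δ * Ψ * (Real.sqrt (1 + δ * Ψ) - 2) + 2 * (Real.sqrt (1 + δ * Ψ) - 1))) ∧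
    (Ψ = 0 →
      sInf ((fun γ : ℝ => 1 / δ + δ * (1 + γ * Ψ) / (γ * (δ - γ))) '' Set.Ioo 0 δ) =
        5 / δ) :=
  inf_of_reflected_constant_g_general δ Ψ hδ
end

section
/- The function x ↦ ((√(1+γx) − 1)·√(1+βx)) / (√(1+βx) − √(1+γx)) is non-decreasing on (0,∞), for fixed 0 < γ < β. -/
/-!
With `a = √(1+βx)` and `b = √(1+γx)` one has `b² - 1 = γx` and `a² - b² = (β-γ)x`, so
`(b-1)/(a-b) = γ/(β-γ) · (a+b)/(1+b)` and the function equals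
`(b - 1) + γ/(β-γ) · b/(1+b) · (a+b)`.
Since `a` and `b` are non-negative and non-decreasing in `x`, and `t ↦ t/(1+t)` is non-decreasing
on `[0,∞)`, every term is non-decreasing.
-/

open Real

lemma monotone_sqrt_one_add_mul {c : ℝ} (hc : 0 ≤ c) : Monotone fun x => √(1 + c * x) :=
  fun _ _ h => sqrt_le_sqrt (by gcongr)

lemma div_one_add_le_div_one_add {a b : ℝ} (ha : 0 ≤ a) (hab : a ≤ b) :
    a / (1 + a) ≤ b / (1 + b) := by
  rw [div_le_div_iff₀ (by positivity) (by linarith)]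
  linarith

lemma sqrt_ratio_eq_add_mul {γ β x : ℝ} (hγ : 0 ≤ γ) (hγβ : γ < β) (hx : 0 < x) :
    (√(1 + γ * x) - 1) * √(1 + β * x) / (√(1 + β * x) - √(1 + γ * x)) =
      √(1 + γ * x) - 1 + γ / (β - γ) *
        (√(1 + γ * x) / (1 + √(1 + γ * x)) * (√(1 + β * x) + √(1 + γ * x))) := by
  have ha2 : √(1 + β * x) ^ 2 = 1 + β * x := sq_sqrt (by nlinarith)
  have hb2 : √(1 + γ * x) ^ 2 = 1 + γ * x := sq_sqrt (by positivity)
  have hba : √(1 + γ * x) < √(1 + β * x) := by gcongr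
  set a := √(1 + β * x)
  set b := √(1 + γ * x)
  have hb : 0 ≤ b := sqrt_nonneg _
  have hβγ : β - γ ≠ 0 := sub_ne_zero.mpr hγβ.ne'
  have hb1 : 1 + b ≠ 0 := by positivity
  rw [div_eq_iff (sub_ne_zero.mpr hba.ne')]
  field_simp
  linear_combination (β * b) * hb2 - (γ * b) * ha2

/-- For fixed `0 < γ < β`, the function
`x ↦ ((√(1+γx) − 1)·√(1+βx)) / (√(1+βx) − √(1+γx))` is non-decreasing on `(0,∞)`. -/
theorem monotoneOn_k (γ β : ℝ) (hγ : 0 < γ) (hγβ : γ < β) :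
    MonotoneOn
      (fun x : ℝ =>
        (Real.sqrt (1 + γ * x) - 1) * Real.sqrt (1 + β * x) /
          (Real.sqrt (1 + β * x) - Real.sqrt (1 + γ * x)))
      (Set.Ioi 0) := by
  have ha := monotone_sqrt_one_add_mul (hγ.trans hγβ).le
  have hb := monotone_sqrt_one_add_mul hγ.le
  have hb_div : Monotone fun x => √(1 + γ * x) / (1 + √(1 + γ * x)) :=
    fun _ _ h => div_one_add_le_div_one_add (sqrt_nonneg _) (hb h)
  have hprod : Monotone fun x =>
      √(1 + γ * x) / (1 + √(1 + γ * x)) * (√(1 + β * x) + √(1 + γ * x)) :=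
    hb_div.mul (ha.add hb) (fun _ => by positivity) (fun _ => by positivity)
  have hc : 0 ≤ γ / (β - γ) := div_nonneg hγ.le (sub_pos.mpr hγβ).le
  exact ((hb.add_const (-1)).add (hprod.const_mul hc)).monotoneOn _ |>.congr
    fun x hx => by rw [sqrt_ratio_eq_add_mul hγ.le hγβ hx]; ring
end

section
/- Let A and B be right-continuous, non-decreasing functions starting at zero. Then E(A)^{−1}·E(B) = E(C), where C = B^c − A^c + Σ_{s≤·} (ΔB_s − ΔA_s)/(1+ΔA_s). -/
/-- The jump of a function `A` at a point `s`. -/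
noncomputable def jumpOf (A : ℝ → ℝ) (s : ℝ) : ℝ :=
  A s - Function.leftLim A s

/-- The continuous part of `A` at time `t`: `A t` minus the sum of the jumps of `A`
over `(0, t]`. -/
noncomputable def contPart (A : ℝ → ℝ) (t : ℝ) : ℝ :=
  A t - ∑' s : Set.Ioc (0 : ℝ) t, jumpOf A s

/-!
The identity is algebraic once the infinite products make sense: `exp` turns the difference of
continuous parts into a quotient, and `1 + (ΔB - ΔA) / (1 + ΔA) = (1 + ΔB) / (1 + ΔA)`, so it
suffices that `∏ (1 + ΔB)` and `∏ (1 + ΔA)` converge, the latter to a nonzero limit. Both follow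
from the summability of the jumps of a monotone function over a bounded interval, which holds
because the jumps are dominated by the atoms of the Stieltjes measure of its right-continuous
regularization.
-/

open Set Filter Topology Function MeasureTheory

lemma summable_measureReal_singleton {α : Type*} [MeasurableSpace α]
    [MeasurableSingletonClass α] (μ : Measure α) {S : Set α} (hS : μ S ≠ ⊤) :
    Summable fun s : S ↦ μ.real {(s : α)} := by
  refine ENNReal.summable_toReal (ne_top_of_le_ne_top hS ?_)
  calc ∑' s : S, μ {(s : α)} ≤ μ (⋃ s : S, {(s : α)}) :=
        tsum_meas_le_meas_iUnion_of_disjoint μ (fun _ ↦ measurableSet_singleton _)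
          fun _ _ hne ↦ by simpa [Subtype.val_inj]
    _ = μ S := by simp

lemma Real.tprod_one_add_ne_zero {ι : Type*} {f : ι → ℝ} (hf : Summable f)
    (h : ∀ i, -1 < f i) : ∏' i, (1 + f i) ≠ 0 := by
  rw [← Real.rexp_tsum_eq_tprod (fun i ↦ by linarith [h i])
    (Real.summable_log_one_add_of_summable hf)]
  exact Real.exp_ne_zero _

section Jumps

variable {f g : ℝ → ℝ}

lemma Monotone.jumpOf_nonneg (hf : Monotone f) (s : ℝ) : 0 ≤ jumpOf f s :=
  sub_nonneg.2 (hf.leftLim_le le_rfl)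

lemma Monotone.jumpOf_eq_of_eventuallyEq {s : ℝ} (hg : Monotone g) (h : f =ᶠ[𝓝 s] g) :
    jumpOf f s = jumpOf g s := by
  have hleft : leftLim f s = leftLim g s :=
    leftLim_eq_of_tendsto ((hg.tendsto_leftLim s).congr' (h.filter_mono nhdsWithin_le_nhds).symm)
  rw [jumpOf, jumpOf, hleft, h.eq_of_nhds]

lemma Monotone.jumpOf_le_measureReal_singleton (hf : Monotone f) (s : ℝ) :
    jumpOf f s ≤ hf.stieltjesFunction.measure.real {s} := by
  have hleft : leftLim hf.stieltjesFunction s = leftLim f s :=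
    leftLim_rightLim (hf.tendsto_leftLim s)
  rw [measureReal_def, StieltjesFunction.measure_singleton, hleft, Monotone.stieltjesFunction_eq,
    ENNReal.toReal_ofReal (sub_nonneg.2 ((hf.leftLim_le le_rfl).trans (hf.le_rightLim le_rfl)))]
  exact sub_le_sub_right (hf.le_rightLim le_rfl) _

lemma Monotone.summable_jumpOf (hf : Monotone f) (a b : ℝ) :
    Summable fun s : Ioc a b ↦ jumpOf f s :=
  (summable_measureReal_singleton hf.stieltjesFunction.measure (by simp)).of_nonneg_of_le
    (fun s ↦ hf.jumpOf_nonneg s) fun s ↦ hf.jumpOf_le_measureReal_singleton s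

lemma MonotoneOn.exists_monotone_jumpOf_eq {a : ℝ} (hf : MonotoneOn f (Ici a)) :
    ∃ g : ℝ → ℝ, Monotone g ∧ ∀ s, a < s → jumpOf f s = jumpOf g s := by
  let g : ℝ → ℝ := fun x ↦ f (max x a)
  have hg : Monotone g := fun x y hxy ↦
    hf (mem_Ici.2 (le_max_right x a)) (mem_Ici.2 (le_max_right y a)) (max_le_max_right a hxy)
  refine ⟨g, hg, fun s hs ↦ hg.jumpOf_eq_of_eventuallyEq ?_⟩
  filter_upwards [Ici_mem_nhds hs] with x hx
  simp only [g, max_eq_left (mem_Ici.1 hx)]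

lemma MonotoneOn.jumpOf_nonneg {a s : ℝ} (hf : MonotoneOn f (Ici a)) (hs : a < s) :
    0 ≤ jumpOf f s := by
  obtain ⟨g, hg, hjump⟩ := hf.exists_monotone_jumpOf_eq
  exact hjump s hs ▸ hg.jumpOf_nonneg s

lemma MonotoneOn.summable_jumpOf {a : ℝ} (hf : MonotoneOn f (Ici a)) (b : ℝ) :
    Summable fun s : Ioc a b ↦ jumpOf f s := by
  obtain ⟨g, hg, hjump⟩ := hf.exists_monotone_jumpOf_eq
  exact (hg.summable_jumpOf a b).congr fun s ↦ (hjump s s.2.1).symm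

end Jumps

theorem stochExp_inv_mul_general (A B : ℝ → ℝ)
    (hA_mono : MonotoneOn A (Set.Ici 0))
    (hB_mono : MonotoneOn B (Set.Ici 0)) :
    ∀ t ∈ Set.Ici (0 : ℝ),
      (Real.exp (contPart A t) * ∏' s : Set.Ioc (0 : ℝ) t, (1 + jumpOf A s))⁻¹ *
          (Real.exp (contPart B t) * ∏' s : Set.Ioc (0 : ℝ) t, (1 + jumpOf B s)) =
        Real.exp (contPart B t - contPart A t) *
          ∏' s : Set.Ioc (0 : ℝ) t,
            (1 + (jumpOf B s - jumpOf A s) / (1 + jumpOf A s)) := by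
  intro t _
  have hA_sum := hA_mono.summable_jumpOf t
  have hA_pos : ∀ s : Ioc (0 : ℝ) t, 0 < 1 + jumpOf A s := fun s ↦ by
    linarith [hA_mono.jumpOf_nonneg s.2.1]
  have hA_prod : ∏' s : Ioc (0 : ℝ) t, (1 + jumpOf A s) ≠ 0 :=
    Real.tprod_one_add_ne_zero hA_sum fun s ↦ by linarith [hA_pos s]
  have hfactor : ∀ s : Ioc (0 : ℝ) t, 1 + (jumpOf B s - jumpOf A s) / (1 + jumpOf A s) =
      (1 + jumpOf B s) / (1 + jumpOf A s) := fun s ↦ by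
    field_simp [(hA_pos s).ne']
    ring
  simp_rw [hfactor]
  rw [Multipliable.tprod_div₀ (Real.multipliable_one_add_of_summable (hB_mono.summable_jumpOf t))
    (Real.multipliable_one_add_of_summable hA_sum) hA_prod, Real.exp_sub]
  field_simp

/-- Let `A` and `B` be right-continuous, non-decreasing functions starting at zero. Then
`E(A)⁻¹ · E(B) = E(C)`, where `C = B^c − A^c + Σ_{s ≤ ·} (ΔB_s − ΔA_s)/(1 + ΔA_s)`, all
stochastic exponentials being given by the Doléans-Dade formula
`E(V)_t = e^{V^c_t} ∏_{s ≤ t} (1 + ΔV_s)`. -/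
theorem stochExp_inv_mul (A B : ℝ → ℝ)
    (hA_mono : MonotoneOn A (Set.Ici 0))
    (hA_rc : ∀ t ∈ Set.Ici (0 : ℝ), ContinuousWithinAt A (Set.Ici t) t)
    (hA0 : A 0 = 0)
    (hB_mono : MonotoneOn B (Set.Ici 0))
    (hB_rc : ∀ t ∈ Set.Ici (0 : ℝ), ContinuousWithinAt B (Set.Ici t) t)
    (hB0 : B 0 = 0) :
    ∀ t ∈ Set.Ici (0 : ℝ),
      (Real.exp (contPart A t) * ∏' s : Set.Ioc (0 : ℝ) t, (1 + jumpOf A s))⁻¹ *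
          (Real.exp (contPart B t) * ∏' s : Set.Ioc (0 : ℝ) t, (1 + jumpOf B s)) =
        Real.exp (contPart B t - contPart A t) *
          ∏' s : Set.Ioc (0 : ℝ) t,
            (1 + (jumpOf B s - jumpOf A s) / (1 + jumpOf A s)) :=
  stochExp_inv_mul_general A B hA_mono hB_mono
end

section
/- Let A be a right-continuous non-decreasing function with A(0)=0 and 0 < γ < β. Then for every t ≥ 0, ∫_{[t,∞)} E(γA)_s^{−1} dA_s ≤ (1/γ)·E(γA)_{t−}^{−1}, where the integral is the Lebesgue–Stieltjes integral with respect to dA. -/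
/-!
Write `E` for the exponential. The product formula gives, for `0 ≤ u ≤ v`,
`E v = E u · e^{γ(A v - A u)} · ∏_{s ∈ (u,v]} (1 + γΔA_s) e^{-γΔA_s}`. Since
`1 + ∑ x ≤ ∏ (1 + x) ≤ e^{∑ x}` for `x ≥ 0`, the jumps in `(u,v]` add up to at most `A v - A u`,
and `y ↦ (1 + y) e^{-y}` is antitone on `[0, ∞)`, this yields
`E u (1 + γ(A v - A u)) ≤ E v ≤ E u e^{γ(A v - A u)}`. Hence `E ≥ 1` is a Stieltjes function, and
letting `u` increase, `γ E_v⁻¹ (A v - A_{u-}) ≤ E_{u-}⁻¹ - E_v⁻¹`. Read on the closed intervals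
`[s - r, s + r]` and differentiated (Besicovitch), this says `γ E⁻¹ dA ≤ d(-E⁻¹)` as measures; the
`d(-E⁻¹)`-mass of `[t, ∞)` is at most `E_{t-}⁻¹`.
-/

open MeasureTheory Filter Set Function Topology

theorem Finset.one_add_sum_le_prod_one_add {ι R : Type*} [CommSemiring R] [PartialOrder R]
    [IsOrderedRing R] (s : Finset ι) {f : ι → R} (hf : ∀ i ∈ s, 0 ≤ f i) :
    1 + ∑ i ∈ s, f i ≤ ∏ i ∈ s, (1 + f i) := by
  classical
  induction s using Finset.cons_induction with
  | empty => simp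
  | cons a s ha ih =>
    rw [Finset.sum_cons, Finset.prod_cons]
    have hfa := hf a (Finset.mem_cons_self a s)
    have hs := fun i hi => hf i (Finset.mem_cons_of_mem hi)
    calc 1 + (f a + ∑ i ∈ s, f i) ≤ 1 + (f a + ∑ i ∈ s, f i) + f a * ∑ i ∈ s, f i :=
          le_add_of_nonneg_right (mul_nonneg hfa (Finset.sum_nonneg hs))
      _ = (1 + f a) * (1 + ∑ i ∈ s, f i) := by ring
      _ ≤ (1 + f a) * ∏ i ∈ s, (1 + f i) :=
          mul_le_mul_of_nonneg_left (ih hs) (add_nonneg zero_le_one hfa)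

namespace Real

variable {ι : Type*} {x : ι → ℝ}

theorem one_add_tsum_le_tprod_one_add (hx0 : ∀ i, 0 ≤ x i) (hx : Summable x) :
    1 + ∑' i, x i ≤ ∏' i, (1 + x i) :=
  le_of_tendsto_of_tendsto' (hx.hasSum.const_add 1)
    (Real.multipliable_one_add_of_summable hx).hasProd
    fun s => s.one_add_sum_le_prod_one_add fun i _ => hx0 i

theorem tprod_one_add_le_exp_tsum (hx0 : ∀ i, 0 ≤ x i) (hx : Summable x) :
    ∏' i, (1 + x i) ≤ exp (∑' i, x i) :=
  le_of_tendsto_of_tendsto' (Real.multipliable_one_add_of_summable hx).hasProd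
    (hx.hasSum.rexp) fun s => by simpa [Real.exp_sum] using Real.prod_one_add_le_exp_sum s hx0

theorem hasProd_one_add_mul_exp_neg (hx : Summable x) :
    HasProd (fun i => (1 + x i) * exp (-x i)) ((∏' i, (1 + x i)) * exp (-∑' i, x i)) :=
  (Real.multipliable_one_add_of_summable hx).hasProd.mul hx.hasSum.neg.rexp

theorem antitoneOn_one_add_mul_exp_neg : AntitoneOn (fun y => (1 + y) * exp (-y)) (Ici 0) := by
  intro a ha b hb hab
  have key : 1 + b ≤ (1 + a) * exp (b - a) := by
    nlinarith [mul_le_mul_of_nonneg_left (add_one_le_exp (b - a))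
      (by linarith [mem_Ici.1 ha] : (0 : ℝ) ≤ 1 + a), mul_nonneg (mem_Ici.1 ha) (sub_nonneg.2 hab)]
  calc (1 + b) * exp (-b) ≤ (1 + a) * exp (b - a) * exp (-b) := by gcongr
    _ = (1 + a) * exp (-a) := by rw [mul_assoc, ← exp_add]; ring_nf

end Real

theorem MeasureTheory.tsum_measure_singleton_le {α : Type*} [MeasurableSpace α]
    [MeasurableSingletonClass α] (μ : Measure α) (S : Set α) :
    ∑' s : S, μ {(s : α)} ≤ μ S := by
  simpa using tsum_meas_le_meas_iUnion_of_disjoint μ (As := fun s : S => {(s : α)})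
    (fun _ => measurableSet_singleton _) fun x y hne => by simpa [Subtype.val_inj]

namespace StieltjesFunction

variable (A : StieltjesFunction ℝ)

theorem jumpOf_nonneg (s : ℝ) : 0 ≤ jumpOf A s :=
  sub_nonneg.2 (A.mono.leftLim_le le_rfl)

theorem jumpOf_eq_toReal_measure_singleton (s : ℝ) : jumpOf A s = (A.measure {s}).toReal := by
  rw [measure_singleton, ← jumpOf, ENNReal.toReal_ofReal (A.jumpOf_nonneg s)]

variable {A} {S : Set ℝ}

theorem summable_jumpOf (hS : A.measure S ≠ ⊤) : Summable fun s : S => jumpOf A s := by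
  simp_rw [jumpOf_eq_toReal_measure_singleton]
  exact ENNReal.summable_toReal (ne_top_of_le_ne_top hS (tsum_measure_singleton_le A.measure S))

theorem tsum_jumpOf_le (hS : A.measure S ≠ ⊤) :
    ∑' s : S, jumpOf A s ≤ (A.measure S).toReal := by
  simp_rw [jumpOf_eq_toReal_measure_singleton]
  rw [← ENNReal.tsum_toReal_eq fun s => measure_ne_top_of_subset (singleton_subset_iff.2 s.2) hS]
  exact ENNReal.toReal_mono hS (tsum_measure_singleton_le A.measure S)

theorem summable_jumpOf_Ioc (u v : ℝ) : Summable fun s : Ioc u v => jumpOf A s :=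
  summable_jumpOf (by simp [measure_Ioc])

theorem tsum_jumpOf_Ioc_le {u v : ℝ} (huv : u ≤ v) :
    ∑' s : Ioc u v, jumpOf A s ≤ A v - A u := by
  simpa [measure_Ioc, sub_nonneg.2 (A.mono huv)] using tsum_jumpOf_le (A := A) (S := Ioc u v)
    (by simp [measure_Ioc])

theorem measure_Ici_le_of_le {c : ℝ} (hc : ∀ x, A x ≤ c) (t : ℝ) :
    A.measure (Ici t) ≤ ENNReal.ofReal (c - leftLim A t) := by
  have hbdd : BddAbove (range A) := ⟨c, forall_mem_range.2 hc⟩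
  rw [A.measure_Ici (tendsto_atTop_ciSup A.mono hbdd)]
  exact ENNReal.ofReal_le_ofReal (sub_le_sub_right (ciSup_le hc) _)

noncomputable def negInv (F : StieltjesFunction ℝ) (hF : ∀ x, 0 < F x) : StieltjesFunction ℝ where
  toFun x := -(F x)⁻¹
  mono' _ _ h := neg_le_neg (inv_anti₀ (hF _) (F.mono h))
  right_continuous' x :=
    ((continuousAt_inv₀ (hF x).ne').neg).comp_continuousWithinAt (F.right_continuous x)

@[simp]
theorem negInv_apply (F : StieltjesFunction ℝ) (hF : ∀ x, 0 < F x) (x : ℝ) :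
    F.negInv hF x = -(F x)⁻¹ :=
  rfl

theorem leftLim_negInv (F : StieltjesFunction ℝ) (hF : ∀ x, 0 < F x) (x : ℝ) :
    leftLim (F.negInv hF) x = -(leftLim F x)⁻¹ := by
  have hpos : 0 < leftLim F x := (hF (x - 1)).trans_le (F.mono.le_leftLim (by linarith))
  exact leftLim_eq_of_tendsto
    (((continuousAt_inv₀ hpos.ne').neg).tendsto.comp (F.mono.tendsto_leftLim x))

variable (A G : StieltjesFunction ℝ) {f : ℝ → ℝ}

theorem ofReal_le_rnDeriv (hf : ∀ s, ContinuousWithinAt f (Ici s) s)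
    (hfG : ∀ u v, u ≤ v → f v * (A v - leftLim A u) ≤ G v - leftLim G u) :
    ∀ᵐ s ∂A.measure, ENNReal.ofReal (f s) ≤ G.measure.rnDeriv A.measure s := by
  filter_upwards [Besicovitch.ae_tendsto_rnDeriv G.measure A.measure,
    (Besicovitch.vitaliFamily A.measure).ae_eventually_measure_pos] with s hlim hpos
  have hshift : Tendsto (s + ·) (𝓝[>] 0) (𝓝[≥] s) := by
    refine tendsto_nhdsWithin_of_tendsto_nhds_of_eventually_within _ ?_ ?_
    · simpa using ((continuous_const_add s).tendsto 0).mono_left nhdsWithin_le_nhds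
    · filter_upwards [self_mem_nhdsWithin] with r hr
      exact le_add_of_nonneg_right (le_of_lt (mem_Ioi.1 hr))
  have hfs : Tendsto (fun r => ENNReal.ofReal (f (s + r))) (𝓝[>] 0) (𝓝 (ENNReal.ofReal (f s))) :=
    (ENNReal.continuous_ofReal.tendsto _).comp ((hf s).tendsto.comp hshift)
  refine le_of_tendsto_of_tendsto hfs hlim ?_
  -- on the ball `[s - r, s + r]`, `hfG` bounds the ratio of increments below by `f (s + r)`
  filter_upwards [Besicovitch.tendsto_filterAt A.measure s hpos, self_mem_nhdsWithin]
    with r hr (hr0 : 0 < r)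
  rw [ENNReal.le_div_iff_mul_le (Or.inl hr.ne') (Or.inl measure_closedBall_lt_top.ne),
    Real.closedBall_eq_Icc, measure_Icc, measure_Icc,
    ← ENNReal.ofReal_mul' (sub_nonneg.2 (A.mono.leftLim_le (by linarith)))]
  exact ENNReal.ofReal_le_ofReal (hfG _ _ (by linarith))

theorem setIntegral_le_toReal_measure (hf0 : ∀ s, 0 ≤ f s)
    (hf : ∀ s, ContinuousWithinAt f (Ici s) s)
    (hfG : ∀ u v, u ≤ v → f v * (A v - leftLim A u) ≤ G v - leftLim G u)
    {S : Set ℝ} (hS : G.measure S ≠ ⊤) :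
    ∫ s in S, f s ∂A.measure ≤ (G.measure S).toReal := by
  by_cases hfi : Integrable f (A.measure.restrict S)
  · rw [integral_eq_lintegral_of_nonneg_ae (Eventually.of_forall hf0) hfi.aestronglyMeasurable]
    refine ENNReal.toReal_mono hS ?_
    calc ∫⁻ s in S, ENNReal.ofReal (f s) ∂A.measure
        ≤ A.measure.withDensity (fun s => ENNReal.ofReal (f s)) S := withDensity_apply_le _ _
      _ ≤ A.measure.withDensity (G.measure.rnDeriv A.measure) S :=
          withDensity_mono (ofReal_le_rnDeriv A G hf hfG) S
      _ ≤ G.measure S := Measure.withDensity_rnDeriv_le G.measure A.measure S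
  · rw [integral_undef hfi]
    exact ENNReal.toReal_nonneg

end StieltjesFunction

noncomputable def jumpFactor (A : StieltjesFunction ℝ) (γ s : ℝ) : ℝ :=
  (1 + γ * jumpOf A s) * Real.exp (-(γ * jumpOf A s))

noncomputable def stochExp (A : StieltjesFunction ℝ) (γ t : ℝ) : ℝ :=
  Real.exp (γ * A t) * ∏' s : Ioc (0 : ℝ) t, jumpFactor A γ s

section StochExp

variable (A : StieltjesFunction ℝ) {γ : ℝ}

theorem hasProd_jumpFactor (u v : ℝ) :
    HasProd (fun s : Ioc u v => jumpFactor A γ s)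
      ((∏' s : Ioc u v, (1 + γ * jumpOf A s)) * Real.exp (-∑' s : Ioc u v, γ * jumpOf A s)) :=
  Real.hasProd_one_add_mul_exp_neg ((A.summable_jumpOf_Ioc u v).mul_left γ)

theorem tprod_jumpFactor_le_one (hγ : 0 ≤ γ) (u v : ℝ) :
    ∏' s : Ioc u v, jumpFactor A γ s ≤ 1 := by
  have hx0 (s : Ioc u v) : 0 ≤ γ * jumpOf A s := mul_nonneg hγ (A.jumpOf_nonneg s)
  have hx := (A.summable_jumpOf_Ioc u v).mul_left γ
  calc ∏' s : Ioc u v, jumpFactor A γ s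
      ≤ Real.exp (∑' s : Ioc u v, γ * jumpOf A s) *
          Real.exp (-∑' s : Ioc u v, γ * jumpOf A s) := by
        rw [(hasProd_jumpFactor A u v).tprod_eq]
        gcongr
        exact Real.tprod_one_add_le_exp_tsum hx0 hx
    _ = 1 := by rw [← Real.exp_add, add_neg_cancel, Real.exp_zero]

theorem le_tprod_jumpFactor (hγ : 0 ≤ γ) {u v : ℝ} (huv : u ≤ v) :
    (1 + γ * (A v - A u)) * Real.exp (-(γ * (A v - A u))) ≤
      ∏' s : Ioc u v, jumpFactor A γ s := by
  have hx0 (s : Ioc u v) : 0 ≤ γ * jumpOf A s := mul_nonneg hγ (A.jumpOf_nonneg s)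
  have hx := (A.summable_jumpOf_Ioc u v).mul_left γ
  have hJ : ∑' s : Ioc u v, γ * jumpOf A s ≤ γ * (A v - A u) := by
    rw [tsum_mul_left]
    exact mul_le_mul_of_nonneg_left (A.tsum_jumpOf_Ioc_le huv) hγ
  calc (1 + γ * (A v - A u)) * Real.exp (-(γ * (A v - A u)))
      ≤ (1 + ∑' s : Ioc u v, γ * jumpOf A s) * Real.exp (-∑' s : Ioc u v, γ * jumpOf A s) :=
        Real.antitoneOn_one_add_mul_exp_neg (tsum_nonneg hx0) ((tsum_nonneg hx0).trans hJ) hJ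
    _ ≤ ∏' s : Ioc u v, jumpFactor A γ s := by
        rw [(hasProd_jumpFactor A u v).tprod_eq]
        gcongr
        exact Real.one_add_tsum_le_tprod_one_add hx0 hx

theorem stochExp_of_nonpos (hA0 : ∀ s : ℝ, s ≤ 0 → A s = 0) {t : ℝ} (ht : t ≤ 0) :
    stochExp A γ t = 1 := by
  have : IsEmpty (Ioc (0 : ℝ) t) := isEmpty_coe_sort.2 (Ioc_eq_empty (not_lt.2 ht))
  simp [stochExp, hA0 t ht]

theorem stochExp_eq_mul {u v : ℝ} (h0u : 0 ≤ u) (huv : u ≤ v) :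
    stochExp A γ v =
      stochExp A γ u * (Real.exp (γ * (A v - A u)) * ∏' s : Ioc u v, jumpFactor A γ s) := by
  have hsplit : ∏' s : Ioc 0 v, jumpFactor A γ s =
      (∏' s : Ioc 0 u, jumpFactor A γ s) * ∏' s : Ioc u v, jumpFactor A γ s := by
    rw [← Ioc_union_Ioc_eq_Ioc h0u huv]
    exact (hasProd_jumpFactor A 0 u).multipliable.tprod_union_disjoint
      (Ioc_disjoint_Ioc_of_le le_rfl) (hasProd_jumpFactor A u v).multipliable
  have hexp : Real.exp (γ * A v) = Real.exp (γ * A u) * Real.exp (γ * (A v - A u)) := by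
    rw [← Real.exp_add]; ring_nf
  rw [stochExp, stochExp, hsplit, hexp]
  ring

theorem stochExp_nonneg (hγ : 0 ≤ γ) (t : ℝ) : 0 ≤ stochExp A γ t :=
  mul_nonneg (Real.exp_pos _).le (tprod_nonneg fun s =>
    mul_nonneg (by linarith [mul_nonneg hγ (A.jumpOf_nonneg s)]) (Real.exp_pos _).le)

variable (hγ : 0 ≤ γ) (hA0 : ∀ s : ℝ, s ≤ 0 → A s = 0)
include hγ hA0

theorem stochExp_mul_le_and_le_mul {u v : ℝ} (huv : u ≤ v) :
    stochExp A γ u * (1 + γ * (A v - A u)) ≤ stochExp A γ v ∧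
      stochExp A γ v ≤ stochExp A γ u * Real.exp (γ * (A v - A u)) := by
  wlog h0u : 0 ≤ u generalizing u v
  · have hmax (t : ℝ) : stochExp A γ (max t 0) = stochExp A γ t ∧ A (max t 0) = A t := by
      rcases le_total t 0 with ht | ht
      · simp [max_eq_right ht, stochExp_of_nonpos A hA0 ht, stochExp_of_nonpos A hA0 le_rfl,
          hA0 t ht, hA0 0 le_rfl]
      · simp [max_eq_left ht]
    have := this (max_le_max_right 0 huv) (le_max_right u 0)
    rwa [(hmax u).1, (hmax u).2, (hmax v).1, (hmax v).2] at this
  rw [stochExp_eq_mul A h0u huv]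
  have hE := stochExp_nonneg A hγ u
  constructor
  · calc stochExp A γ u * (1 + γ * (A v - A u))
        = stochExp A γ u * (Real.exp (γ * (A v - A u)) *
            ((1 + γ * (A v - A u)) * Real.exp (-(γ * (A v - A u))))) := by
          rw [Real.exp_neg]
          field_simp
      _ ≤ _ := by gcongr; exact le_tprod_jumpFactor A hγ huv
  · calc _ ≤ stochExp A γ u * (Real.exp (γ * (A v - A u)) * 1) := by
          gcongr; exact tprod_jumpFactor_le_one A hγ u v
      _ = _ := by rw [mul_one]

theorem one_le_stochExp (t : ℝ) : 1 ≤ stochExp A γ t := by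
  rcases le_total t 0 with ht | ht
  · exact (stochExp_of_nonpos A hA0 ht).ge
  · have h := (stochExp_mul_le_and_le_mul A hγ hA0 ht).1
    rw [stochExp_of_nonpos A hA0 le_rfl, hA0 0 le_rfl, one_mul, sub_zero] at h
    have hAt : 0 ≤ A t := hA0 0 le_rfl ▸ A.mono ht
    nlinarith

theorem monotone_stochExp : Monotone (stochExp A γ) := fun u v huv => by
  have hD : 0 ≤ γ * (A v - A u) := mul_nonneg hγ (sub_nonneg.2 (A.mono huv))
  calc stochExp A γ u ≤ stochExp A γ u * (1 + γ * (A v - A u)) :=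
        le_mul_of_one_le_right (stochExp_nonneg A hγ u) (by linarith)
    _ ≤ stochExp A γ v := (stochExp_mul_le_and_le_mul A hγ hA0 huv).1

theorem continuousWithinAt_stochExp (t : ℝ) : ContinuousWithinAt (stochExp A γ) (Ici t) t := by
  have hA : Tendsto (fun v => stochExp A γ t * Real.exp (γ * (A v - A t))) (𝓝[≥] t)
      (𝓝 (stochExp A γ t)) := by
    have hexp := Real.continuous_exp.continuousAt.tendsto.comp
      (((A.right_continuous t).sub (tendsto_const_nhds (x := A t))).const_mul γ)
    simpa using (tendsto_const_nhds (x := stochExp A γ t)).mul hexp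
  refine tendsto_of_tendsto_of_tendsto_of_le_of_le' tendsto_const_nhds hA ?_ ?_
  all_goals filter_upwards [self_mem_nhdsWithin] with v (hv : t ≤ v)
  · exact monotone_stochExp A hγ hA0 hv
  · exact (stochExp_mul_le_and_le_mul A hγ hA0 hv).2

noncomputable def stochExpStieltjes : StieltjesFunction ℝ where
  toFun := stochExp A γ
  mono' := monotone_stochExp A hγ hA0
  right_continuous' := continuousWithinAt_stochExp A hγ hA0

@[simp]
theorem coe_stochExpStieltjes : ⇑(stochExpStieltjes A hγ hA0) = stochExp A γ :=
  rfl

theorem one_le_leftLim_stochExp (u : ℝ) : 1 ≤ leftLim (stochExp A γ) u :=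
  ge_of_tendsto ((monotone_stochExp A hγ hA0).tendsto_leftLim u)
    (Eventually.of_forall (one_le_stochExp A hγ hA0))

theorem leftLim_stochExp_mul_le {u v : ℝ} (huv : u ≤ v) :
    leftLim (stochExp A γ) u * (1 + γ * (A v - leftLim A u)) ≤ stochExp A γ v := by
  refine le_of_tendsto (((monotone_stochExp A hγ hA0).tendsto_leftLim u).mul
    (tendsto_const_nhds.add ((tendsto_const_nhds.sub (A.mono.tendsto_leftLim u)).const_mul γ))) ?_
  filter_upwards [self_mem_nhdsWithin] with w (hw : w < u)
  exact (stochExp_mul_le_and_le_mul A hγ hA0 (hw.le.trans huv)).1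

theorem mul_inv_stochExp_mul_le {u v : ℝ} (huv : u ≤ v) :
    γ * (stochExp A γ v)⁻¹ * (A v - leftLim A u) ≤
      (leftLim (stochExp A γ) u)⁻¹ - (stochExp A γ v)⁻¹ := by
  have hx := one_pos.trans_le (one_le_leftLim_stochExp A hγ hA0 u)
  have hy : 0 < stochExp A γ v := one_pos.trans_le (one_le_stochExp A hγ hA0 v)
  have key := leftLim_stochExp_mul_le A hγ hA0 huv
  rw [inv_sub_inv hx.ne' hy.ne', le_div_iff₀ (mul_pos hx hy)]
  calc _ = γ * (A v - leftLim A u) * leftLim (stochExp A γ) u := by field_simp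
    _ ≤ _ := by linarith

end StochExp

theorem integral_inv_stochExp_le_general (A : StieltjesFunction ℝ) (γ : ℝ)
    (hγ : 0 < γ)
    (hA0 : ∀ s : ℝ, s ≤ 0 → A s = 0)
    (E : ℝ → ℝ)
    (hE : ∀ t, E t = Real.exp (γ * A t) *
      ∏' s : Set.Ioc (0 : ℝ) t,
        ((1 + γ * jumpOf A s) * Real.exp (-(γ * jumpOf A s)))) :
    ∀ t : ℝ, 0 ≤ t →
      ∫ s in Set.Ici t, (E s)⁻¹ ∂A.measure ≤ γ⁻¹ * (Function.leftLim E t)⁻¹ := by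
  intro t _
  obtain rfl : E = stochExp A γ := funext hE
  set F := stochExpStieltjes A hγ.le hA0
  have hF (x : ℝ) : 0 < F x := one_pos.trans_le (one_le_stochExp A hγ.le hA0 x)
  have hG : (F.negInv hF).measure (Ici t) ≤ ENNReal.ofReal (leftLim (stochExp A γ) t)⁻¹ := by
    simpa [F, F.leftLim_negInv] using
      (F.negInv hF).measure_Ici_le_of_le (c := 0) (fun x => neg_nonpos.2 (inv_nonneg.2 (hF x).le)) t
  have hbound := A.setIntegral_le_toReal_measure (F.negInv hF) (f := fun s => γ * (F s)⁻¹)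
    (fun s => mul_nonneg hγ.le (inv_nonneg.2 (hF s).le))
    (fun s => continuousWithinAt_const.mul ((F.right_continuous s).inv₀ (hF s).ne'))
    (fun u v huv => by
      rw [F.negInv_apply, F.leftLim_negInv, coe_stochExpStieltjes, sub_neg_eq_add, neg_add_eq_sub]
      exact mul_inv_stochExp_mul_le A hγ.le hA0 huv)
    (ne_top_of_le_ne_top ENNReal.ofReal_ne_top hG)
  calc ∫ s in Ici t, (stochExp A γ s)⁻¹ ∂A.measure
      = γ⁻¹ * ∫ s in Ici t, γ * (F s)⁻¹ ∂A.measure := by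
        rw [integral_const_mul, inv_mul_cancel_left₀ hγ.ne', coe_stochExpStieltjes]
    _ ≤ γ⁻¹ * ((F.negInv hF).measure (Ici t)).toReal :=
        mul_le_mul_of_nonneg_left hbound (inv_nonneg.2 hγ.le)
    _ ≤ γ⁻¹ * (leftLim (stochExp A γ) t)⁻¹ := by
        gcongr
        exact ENNReal.toReal_le_of_le_ofReal
          (inv_nonneg.2 (zero_le_one.trans (one_le_leftLim_stochExp A hγ.le hA0 t))) hG

/-- Let `A` be a right-continuous non-decreasing function with `A 0 = 0`
(vanishing on `(-∞,0]`) and `0 < γ < β`. If `E` is the Doléans-Dade exponential of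
`γA`, i.e. `E_t = e^{γA_t} ∏_{s ≤ t} (1 + γΔA_s) e^{−γΔA_s}`, then for every `t ≥ 0`,
`∫_{[t,∞)} E_s⁻¹ dA_s ≤ (1/γ) · (E_{t−})⁻¹`, where the integral is the
Lebesgue–Stieltjes integral with respect to `dA`. -/
theorem integral_inv_stochExp_le (A : StieltjesFunction ℝ) (γ β : ℝ)
    (hγ : 0 < γ) (hγβ : γ < β)
    (hA0 : ∀ s : ℝ, s ≤ 0 → A s = 0)
    (E : ℝ → ℝ)
    (hE : ∀ t, E t = Real.exp (γ * A t) *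
      ∏' s : Set.Ioc (0 : ℝ) t,
        ((1 + γ * jumpOf A s) * Real.exp (-(γ * jumpOf A s)))) :
    ∀ t : ℝ, 0 ≤ t →
      ∫ s in Set.Ici t, (E s)⁻¹ ∂A.measure ≤ γ⁻¹ * (Function.leftLim E t)⁻¹ :=
  integral_inv_stochExp_le_general A γ hγ hA0 E hE
end

section
/- If ξ = (ξ_t)_{t∈[0,∞]} is a predictable process with respect to (G_t), then the left-limsup process ξ̄ defined by ξ̄_0 = ξ_0 and ξ̄_t = limsup_{s↑↑t} ξ_s for t > 0 is predictable with respect to the universally completed filtration (G^U_t). -/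
/-!
At `t > 0` the left limsup is `⨅_{u<t} ⨆_{s∈(u,t)} ξ_s`. By density of a countable set `D` of
times, the infimum may be taken over `u ∈ D` and `⨆_{s∈(u,t)} ξ_s = ⨆_{v∈D, v<t} ⨆_{s∈(u,v]} ξ_s`,
so the left limsup is a countable infimum of countable suprema of processes equal to
`⨆_{s∈(u,v]} ξ_s(ω)` for `t > v` and to `-∞` for `t ≤ v`. Such a process is predictable for
`(G^U_t)` as soon as the random variable `⨆_{s∈(u,v]} ξ_s` is `G^U_v`-measurable. Its superlevel
sets are projections to `Ω` of `G_v ⊗ 𝔅`-measurable sets (the predictable σ-algebra stopped at `v`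
lies in `G_v ⊗ 𝔅`), and such projections are universally measurable: coding `Ω` into Cantor space
by countably many `G_v`-sets turns them into preimages of analytic sets, which are null-measurable
for every finite Borel measure by the classical inner approximation through compact sets.

Values are taken in `EReal`, where all limsups exist; the real `limsup` is its `toReal`.
-/

open MeasureTheory Filter
open scoped ENNReal

/-- The universal completion of a σ-algebra `m`: the sets that are null-measurable
with respect to every probability measure on `(Ω, m)`. -/
def univCompletion {Ω : Type*} (m : MeasurableSpace Ω) : MeasurableSpace Ω where
  MeasurableSet' s := ∀ μ : @Measure Ω m, IsProbabilityMeasure μ →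
    @NullMeasurableSet Ω m s μ
  measurableSet_empty := fun μ _ => (@MeasurableSet.empty Ω m).nullMeasurableSet
  measurableSet_compl := fun _ hs μ hμ => (hs μ hμ).compl
  measurableSet_iUnion := fun _ hf μ hμ => NullMeasurableSet.iUnion fun i => hf i μ hμ

/-- The predictable σ-algebra on `Ω × [0,∞]` associated with a family `G` of
σ-algebras: generated by the `G`-adapted processes with continuous paths. -/
def predictableSigmaAlgebra {Ω : Type*} (G : ℝ≥0∞ → MeasurableSpace Ω) :
    MeasurableSpace (Ω × ℝ≥0∞) :=
  MeasurableSpace.generateFrom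
    {s | ∃ X : ℝ≥0∞ → Ω → ℝ, (∀ t, @Measurable Ω ℝ (G t) _ (X t)) ∧
      (∀ ω, Continuous fun t => X t ω) ∧
      ∃ B : Set ℝ, MeasurableSet B ∧ s = {p : Ω × ℝ≥0∞ | X p.2 p.1 ∈ B}}

open Set Topology

theorem Monotone.exists_measure_iUnion_le_add {X : Type*} [MeasurableSpace X] {μ : Measure X}
    {s : ℕ → Set X} (hs : Monotone s) (hfin : μ (⋃ n, s n) ≠ ∞) {δ : ℝ≥0∞} (hδ : δ ≠ 0) :
    ∃ n, μ (⋃ n, s n) ≤ μ (s n) + δ := by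
  rcases eq_or_ne (μ (⋃ n, s n)) 0 with h0 | h0
  · exact ⟨0, by simp [h0]⟩
  obtain ⟨n, hn⟩ := lt_iSup_iff.1 ((ENNReal.sub_lt_self hfin h0 hδ).trans_eq hs.measure_iUnion)
  exact ⟨n, tsub_le_iff_right.1 hn.le⟩

def boundedUpTo (σ : ℕ → ℕ) (k : ℕ) : Set (ℕ → ℕ) := {τ | ∀ i < k, τ i ≤ σ i}

theorem boundedUpTo_zero (σ : ℕ → ℕ) : boundedUpTo σ 0 = univ := by
  simp [boundedUpTo]

theorem boundedUpTo_succ (σ : ℕ → ℕ) (k : ℕ) :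
    boundedUpTo σ (k + 1) = boundedUpTo σ k ∩ {τ | τ k ≤ σ k} := by
  ext τ
  simp only [boundedUpTo, mem_ofPred_eq, mem_inter_iff, Nat.lt_succ_iff_lt_or_eq, or_imp,
    forall_and, forall_eq]

theorem antitone_boundedUpTo (σ : ℕ → ℕ) : Antitone (boundedUpTo σ) :=
  fun _ _ hkl _ hτ i hi => hτ i (hi.trans_le hkl)

theorem exists_measure_range_le_image_boundedUpTo_add {X : Type*} [MeasurableSpace X]
    {μ : Measure X} [IsFiniteMeasure μ] (f : (ℕ → ℕ) → X)
    {ε : ℝ≥0∞} (hε : ε ≠ 0) :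
    ∃ σ : ℕ → ℕ, ∀ k, μ (range f) ≤ μ (f '' boundedUpTo σ k) + ε := by
  -- The bounds `σ k` are chosen one coordinate at a time; step `k` loses at most `δ k`.
  obtain ⟨δ, hδpos, hδsum⟩ := ENNReal.exists_pos_sum_of_countable hε ℕ
  have step (P : Set (ℕ → ℕ)) (k : ℕ) :
      ∃ m, μ (f '' P) ≤ μ (f '' (P ∩ {τ | τ k ≤ m})) + δ k := by
    have hunion : ⋃ m, f '' (P ∩ {τ | τ k ≤ m}) = f '' P := by
      rw [← image_iUnion, ← inter_iUnion, iUnion_eq_univ_iff.2 fun τ => ⟨τ k, le_refl (τ k)⟩,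
        inter_univ]
    have hmono : Monotone fun m => f '' (P ∩ {τ | τ k ≤ m}) :=
      fun _ _ hab => image_mono (inter_subset_inter_right _ fun _ hτ => le_trans hτ hab)
    simpa only [hunion] using hmono.exists_measure_iUnion_le_add (measure_ne_top _ _)
      (ENNReal.coe_ne_zero.2 (hδpos k).ne')
  choose next hnext using step
  let P : ℕ → Set (ℕ → ℕ) := fun k => Nat.rec univ (fun k Pk => Pk ∩ {τ | τ k ≤ next Pk k}) k
  let σ : ℕ → ℕ := fun k => next (P k) k
  have hP (k : ℕ) : P k = boundedUpTo σ k := by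
    induction k with
    | zero => exact (boundedUpTo_zero σ).symm
    | succ k ih => rw [boundedUpTo_succ, ← ih]
  have hbound (k : ℕ) : μ (range f) ≤ μ (f '' P k) + ∑ i ∈ Finset.range k, (δ i : ℝ≥0∞) := by
    induction k with
    | zero => simp [P, image_univ]
    | succ k ih =>
      calc μ (range f) ≤ μ (f '' P k) + ∑ i ∈ Finset.range k, (δ i : ℝ≥0∞) := ih
        _ ≤ μ (f '' P (k + 1)) + δ k + ∑ i ∈ Finset.range k, (δ i : ℝ≥0∞) := by
          gcongr; exact hnext _ _
        _ = μ (f '' P (k + 1)) + ∑ i ∈ Finset.range (k + 1), (δ i : ℝ≥0∞) := by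
          rw [Finset.sum_range_succ, add_assoc, add_comm (δ k : ℝ≥0∞)]
  refine ⟨σ, fun k => (hbound k).trans ?_⟩
  rw [hP k]
  gcongr
  exact (ENNReal.sum_le_tsum _).trans hδsum.le

theorem iInter_closure_image_boundedUpTo_subset {X : Type*} [TopologicalSpace X] [T2Space X]
    {f : (ℕ → ℕ) → X} (hf : Continuous f) (σ : ℕ → ℕ) :
    ⋂ k, closure (f '' boundedUpTo σ k) ⊆ f '' univ.pi fun i => Iic (σ i) := by
  intro x hx
  let F := ⨅ k, comap f (𝓝 x) ⊓ 𝓟 (boundedUpTo σ k)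
  have hF : F.NeBot := by
    refine iInf_neBot_of_directed' ?_ fun k => ?_
    · exact Antitone.directed_ge fun k l hkl =>
        inf_le_inf_left _ (principal_mono.2 (antitone_boundedUpTo σ hkl))
    · rw [inf_principal_neBot_iff]
      rintro U ⟨V, hV, hVU⟩
      obtain ⟨_, hyV, τ, hτ, rfl⟩ := mem_closure_iff_nhds.1 (mem_iInter.1 hx k) V hV
      exact ⟨τ, hVU hyV, hτ⟩
  -- Every coordinate is eventually bounded along `F`, so an ultrafilter finer than `F`
  -- converges coordinatewise, to a preimage of `x` in the compact box.
  let U := Ultrafilter.of F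
  have hUF : (U : Filter (ℕ → ℕ)) ≤ F := Ultrafilter.of_le F
  have hcoord (i : ℕ) : ↑(U.map (Function.eval i)) ≤ 𝓟 (Iic (σ i)) := by
    rw [Ultrafilter.coe_map, le_principal_iff, mem_map]
    refine mem_of_superset (hUF (mem_iInf_of_mem (i + 1) (mem_inf_of_right (mem_principal_self _))))
      fun τ hτ => hτ i (Nat.lt_succ_self i)
  choose a ha hUa using fun i => (finite_Iic (σ i)).isCompact.ultrafilter_le_nhds _ (hcoord i)
  have hU : (U : Filter (ℕ → ℕ)) ≤ 𝓝 a := by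
    rw [nhds_pi, le_pi]
    exact hUa
  have hUx : Tendsto f U (𝓝 x) := tendsto_iff_comap.2 (hUF.trans (iInf_le_of_le 0 inf_le_left))
  exact ⟨a, fun i _ => ha i, tendsto_nhds_unique ((hf.tendsto a).mono_left hU) hUx⟩

section Analytic

variable {X : Type*} [TopologicalSpace X] [T2Space X] [MeasurableSpace X] [OpensMeasurableSpace X]
  {μ : Measure X} [IsFiniteMeasure μ] {A : Set X}

theorem MeasureTheory.AnalyticSet.exists_isCompact_subset_measure_le_add (hA : AnalyticSet A)
    {ε : ℝ≥0∞} (hε : ε ≠ 0) : ∃ K ⊆ A, IsCompact K ∧ μ A ≤ μ K + ε := by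
  rw [AnalyticSet] at hA
  rcases hA with rfl | ⟨f, hf, rfl⟩
  · exact ⟨∅, empty_subset _, isCompact_empty, by simp⟩
  obtain ⟨σ, hσ⟩ := exists_measure_range_le_image_boundedUpTo_add (μ := μ) f hε
  refine ⟨f '' univ.pi fun i => Iic (σ i), image_subset_range _ _,
    (isCompact_univ_pi fun i => (finite_Iic _).isCompact).image hf, ?_⟩
  have hclosures : μ (⋂ k, closure (f '' boundedUpTo σ k)) + ε
      = ⨅ k, (μ (closure (f '' boundedUpTo σ k)) + ε) := by
    rw [Antitone.measure_iInter
      (fun k l hkl => closure_mono (image_mono (antitone_boundedUpTo σ hkl)))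
      (fun k => isClosed_closure.measurableSet.nullMeasurableSet) ⟨0, measure_ne_top _ _⟩,
      ENNReal.iInf_add]
  calc μ (range f) ≤ μ (⋂ k, closure (f '' boundedUpTo σ k)) + ε := by
        rw [hclosures]
        exact le_iInf fun k => (hσ k).trans (by gcongr; exact subset_closure)
    _ ≤ μ (f '' univ.pi fun i => Iic (σ i)) + ε := by
        gcongr; exact iInter_closure_image_boundedUpTo_subset hf σ

theorem MeasureTheory.AnalyticSet.nullMeasurableSet (hA : AnalyticSet A) :
    NullMeasurableSet A μ := by
  choose K hKA hK hμK using fun n : ℕ => hA.exists_isCompact_subset_measure_le_add (μ := μ)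
    (ENNReal.inv_ne_zero.2 (ENNReal.natCast_ne_top n))
  have hS : MeasurableSet (⋃ n, K n) := .iUnion fun n => (hK n).isClosed.measurableSet
  have hle : μ A ≤ μ (⋃ n, K n) := by
    refine ge_of_tendsto' (by simpa using tendsto_const_nhds.add ENNReal.tendsto_inv_nat_nhds_zero)
      fun n => (hμK n).trans ?_
    gcongr
    exact subset_iUnion K n
  exact hS.nullMeasurableSet.congr (ae_eq_of_subset_of_measure_ge (iUnion_subset hKA) hle
    hS.nullMeasurableSet (measure_ne_top _ _))

end Analytic

theorem le_univCompletion {Ω : Type*} (m : MeasurableSpace Ω) : m ≤ univCompletion m :=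
  fun _ hs _ _ => hs.nullMeasurableSet

theorem univCompletion_mono {Ω : Type*} {m₁ m₂ : MeasurableSpace Ω} (h : m₁ ≤ m₂) :
    univCompletion m₁ ≤ univCompletion m₂ := by
  intro s hs μ hμ
  have : IsProbabilityMeasure (μ.trim h) :=
    ⟨by rw [trim_measurableSet_eq h MeasurableSet.univ, measure_univ]⟩
  obtain ⟨t, -, ht, hst⟩ := (hs (μ.trim h) this).exists_measurable_superset_ae_eq
  exact ⟨t, h t ht, ae_eq_of_ae_eq_trim hst.symm⟩

theorem Monotone.univCompletion {Ω : Type*} {G : ℝ≥0∞ → MeasurableSpace Ω} (hG : Monotone G) :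
    Monotone fun t => univCompletion (G t) :=
  fun _ _ hst => univCompletion_mono (hG hst)

theorem MeasurableSpace.exists_countable_of_measurableSet_generateFrom {α : Type*}
    {C : Set (Set α)} {s : Set α} (hs : MeasurableSet[generateFrom C] s) :
    ∃ D ⊆ C, D.Countable ∧ MeasurableSet[generateFrom D] s := by
  let M : MeasurableSpace α :=
    { MeasurableSet' := fun s => ∃ D ⊆ C, D.Countable ∧ MeasurableSet[generateFrom D] s
      measurableSet_empty :=
        ⟨∅, empty_subset _, countable_empty, @MeasurableSet.empty _ (generateFrom ∅)⟩
      measurableSet_compl := fun _ ⟨D, hDC, hD, hs⟩ => ⟨D, hDC, hD, hs.compl⟩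
      measurableSet_iUnion := fun s hs => by
        choose D hDC hD hs using hs
        exact ⟨⋃ i, D i, iUnion_subset hDC, countable_iUnion hD,
          .iUnion fun i => generateFrom_mono (subset_iUnion D i) _ (hs i)⟩ }
  refine generateFrom_le (m := M) (fun t ht => ?_) s hs
  exact ⟨{t}, singleton_subset_iff.2 ht, countable_singleton t, measurableSet_generateFrom rfl⟩

theorem MeasurableSet.exists_measurable_natBool_preimage {Ω Y : Type*} [MeasurableSpace Ω]
    [MeasurableSpace Y] {S : Set (Ω × Y)} (hS : MeasurableSet S) :
    ∃ g : Ω → ℕ → Bool, Measurable g ∧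
      ∃ S' : Set ((ℕ → Bool) × Y), MeasurableSet S' ∧ Prod.map g id ⁻¹' S' = S := by
  classical
  rw [← generateFrom_prod] at hS
  obtain ⟨D, hDC, hD, hSD⟩ := MeasurableSpace.exists_countable_of_measurableSet_generateFrom hS
  obtain ⟨r, hr⟩ := (hD.insert (∅ ×ˢ ∅)).exists_eq_range (insert_nonempty _ _)
  have hrC (n : ℕ) : r n ∈ image2 (· ×ˢ ·) {A : Set Ω | MeasurableSet A}
      {B : Set Y | MeasurableSet B} :=
    insert_subset (mem_image2_of_mem .empty .empty) hDC (hr ▸ mem_range_self n)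
  choose A hA B hB hAB using hrC
  let g : Ω → ℕ → Bool := fun ω n => decide (ω ∈ A n)
  have hg : Measurable g :=
    measurable_pi_lambda _ fun n => measurable_to_bool (by simpa [g, preimage] using hA n)
  have hrect : MeasurableSpace.generateFrom (range r) ≤
      MeasurableSpace.comap (Prod.map g id) inferInstance := by
    refine MeasurableSpace.generateFrom_le ?_
    rintro _ ⟨n, rfl⟩
    refine ⟨((fun c : ℕ → Bool => c n) ⁻¹' {true}) ×ˢ B n,
      (measurable_pi_apply n (measurableSet_singleton true)).prod (hB n), ?_⟩
    rw [← hAB]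
    ext ⟨ω, y⟩
    simp [g]
  obtain ⟨S', hS', hS'S⟩ :=
    hrect S (MeasurableSpace.generateFrom_mono (hr ▸ subset_insert _ _) S hSD)
  exact ⟨g, hg, S', hS', hS'S⟩

theorem measurableSet_univCompletion_image_fst {Ω Y : Type*} [mΩ : MeasurableSpace Ω]
    [TopologicalSpace Y] [PolishSpace Y] [MeasurableSpace Y] [BorelSpace Y] {S : Set (Ω × Y)}
    (hS : MeasurableSet S) : MeasurableSet[univCompletion mΩ] (Prod.fst '' S) := by
  obtain ⟨g, hg, S', hS', rfl⟩ := hS.exists_measurable_natBool_preimage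
  have himage : Prod.fst '' (Prod.map g id ⁻¹' S') = g ⁻¹' (Prod.fst '' S') := by
    ext ω
    simp
  rw [himage]
  intro μ _
  exact (hS'.analyticSet_image measurable_fst).nullMeasurableSet.preimage
    (hg.quasiMeasurePreserving μ)

theorem limsup_nhdsLT_eq_iInf_iSup_Ioc {α β : Type*} [LinearOrder α] [TopologicalSpace α]
    [OrderTopology α] [DenselyOrdered α] [CompleteLattice β] {D : Set α} (hD : Dense D)
    (ζ : α → β) {t : α} (ht : ∃ u, u < t) :
    limsup ζ (𝓝[<] t) = ⨅ u ∈ D, ⨅ (_ : u < t), ⨆ v ∈ D, ⨆ (_ : v < t), ⨆ s ∈ Ioc u v, ζ s := by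
  have hsup (u : α) : ⨆ s ∈ Ioo u t, ζ s = ⨆ v ∈ D, ⨆ (_ : v < t), ⨆ s ∈ Ioc u v, ζ s := by
    apply le_antisymm
    · refine iSup₂_le fun s hs => ?_
      obtain ⟨v, hvD, hsv, hvt⟩ := hD.exists_between hs.2
      exact le_iSup₂_of_le v hvD (le_iSup_of_le hvt (le_iSup₂_of_le s ⟨hs.1, hsv.le⟩ le_rfl))
    · exact iSup₂_le fun v _ => iSup_le fun hvt => iSup₂_le fun s hs =>
        le_iSup₂_of_le s ⟨hs.1, hs.2.trans_lt hvt⟩ le_rfl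
  calc limsup ζ (𝓝[<] t) = ⨅ u, ⨅ (_ : u < t), ⨆ s ∈ Ioo u t, ζ s :=
        (nhdsLT_basis_of_exists_lt ht).limsup_eq_iInf_iSup
    _ = ⨅ u ∈ D, ⨅ (_ : u < t), ⨆ s ∈ Ioo u t, ζ s := by
        refine le_antisymm (le_iInf₂ fun u _ => iInf_le _ u) (le_iInf₂ fun u hut => ?_)
        obtain ⟨w, hwD, huw, hwt⟩ := hD.exists_between hut
        exact iInf₂_le_of_le w hwD (iInf_le_of_le hwt
          (biSup_mono fun s hs => ⟨huw.trans hs.1, hs.2⟩))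
    _ = _ := by simp only [hsup]

/-- No boundedness is needed: where the real `limsup` is junk (`sInf` of an empty or unbounded
below set), it is `0`, as is `EReal.toReal` at `⊤` and `⊥`. -/
theorem Real.limsup_eq_toReal_limsup_coe {γ : Type*} (u : γ → ℝ) (f : Filter γ) :
    limsup u f = (limsup (fun x => (u x : EReal)) f).toReal := by
  have mem_of_lt {a : ℝ} (h : limsup (fun x => (u x : EReal)) f < a) : ∀ᶠ x in f, u x ≤ a :=
    (eventually_lt_of_limsup_lt h).mono fun x hx => (EReal.coe_lt_coe_iff.1 hx).le
  have le_of_mem {a : ℝ} (h : ∀ᶠ x in f, u x ≤ a) : limsup (fun x => (u x : EReal)) f ≤ a :=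
    limsup_le_of_le (h := h.mono fun x hx => EReal.coe_le_coe_iff.2 hx)
  rw [limsup_eq]
  induction h : limsup (fun x => (u x : EReal)) f using EReal.rec with
  | bot =>
    rw [h] at mem_of_lt
    rw [EReal.toReal_bot, ← Real.sInf_univ]
    exact congrArg sInf (eq_univ_of_forall fun a => mem_of_lt (EReal.bot_lt_coe a))
  | top =>
    rw [h] at le_of_mem
    rw [EReal.toReal_top, ← Real.sInf_empty]
    exact congrArg sInf (eq_empty_of_forall_notMem fun a ha =>
      (EReal.coe_lt_top a).not_ge (le_of_mem ha))
  | coe x =>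
    rw [h] at mem_of_lt le_of_mem
    rw [EReal.toReal_coe]
    refine csInf_eq_of_forall_ge_of_forall_gt_exists_lt ⟨x + 1, mem_of_lt ?_⟩
      (fun a ha => EReal.coe_le_coe_iff.1 (le_of_mem ha))
      fun w hw => ⟨(x + w) / 2, mem_of_lt ?_, ?_⟩
    · exact EReal.coe_lt_coe_iff.2 (lt_add_one x)
    · exact EReal.coe_lt_coe_iff.2 (by linarith)
    · linarith

section Predictable

variable {Ω : Type*} {G : ℝ≥0∞ → MeasurableSpace Ω}

theorem measurable_predictable_of_continuous {X : ℝ≥0∞ → Ω → ℝ}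
    (hXa : ∀ t, Measurable[G t] (X t)) (hXc : ∀ ω, Continuous fun t => X t ω) :
    Measurable[predictableSigmaAlgebra G] fun p : Ω × ℝ≥0∞ => X p.2 p.1 :=
  fun _ hB => MeasurableSpace.measurableSet_generateFrom ⟨X, hXa, hXc, _, hB, rfl⟩

theorem measurable_prodMk_right_predictable (t : ℝ≥0∞) :
    Measurable[G t, predictableSigmaAlgebra G] fun ω => (ω, t) :=
  @measurable_generateFrom _ _ (G t) _ _ fun _ ⟨_, hXa, _, _, hB, hs⟩ => hs ▸ hXa t hB

theorem measurable_stoppedAt_predictable (hG : Monotone G) (r : ℝ≥0∞) :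
    Measurable[(G r).prod inferInstance, predictableSigmaAlgebra G]
      fun p : Ω × ℝ≥0∞ => (p.1, min p.2 r) := by
  refine @measurable_generateFrom _ _ ((G r).prod _) _ _ ?_
  rintro _ ⟨X, hXa, hXc, B, hB, rfl⟩
  have hstopped : Measurable[(G r).prod inferInstance]
      fun p : Ω × ℝ≥0∞ => X (min p.2 r) p.1 :=
    (measurable_uncurry_of_continuous_of_measurable (m := G r)
      (u := fun t => X (min t r)) (fun ω => (hXc ω).comp (continuous_id.min continuous_const))
      (fun t => (hXa _).mono (hG (min_le_right t r)) le_rfl)).comp measurable_swap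
  exact hstopped hB

/-- Ramp `t ↦ min 1 (t - u)` vanishes exactly on `[0, u]`, so `A × (u, ∞]` is the positivity set
of one continuous adapted process. -/
theorem measurableSet_predictable_prod_Ioi (hG : Monotone G) {u : ℝ≥0∞} {A : Set Ω}
    (hA : MeasurableSet[G u] A) : MeasurableSet[predictableSigmaAlgebra G] (A ×ˢ Ioi u) := by
  let ψ : ℝ≥0∞ → ℝ := fun t => (min 1 (t - u)).toReal
  have hψ_pos (t : ℝ≥0∞) : 0 < ψ t ↔ u < t := by
    simp [ψ, ENNReal.toReal_pos_iff, tsub_pos_iff_lt]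
  have hψ_cont : Continuous ψ :=
    ENNReal.continuousOn_toReal.comp_continuous
      (continuous_const.min (ENNReal.continuous_sub_right u)) fun t =>
        ne_top_of_le_ne_top ENNReal.one_ne_top (min_le_left _ _)
  let X : ℝ≥0∞ → Ω → ℝ := fun t => A.indicator fun _ => ψ t
  have hXa (t : ℝ≥0∞) : Measurable[G t] (X t) := by
    by_cases ht : u < t
    · exact measurable_const.indicator (hG ht.le A hA)
    · have : ψ t = 0 := le_antisymm (not_lt.1 ((hψ_pos t).not.2 ht)) ENNReal.toReal_nonneg
      simp only [X, this, indicator_zero]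
      exact measurable_const
  have hXc (ω : Ω) : Continuous fun t => X t ω := by
    by_cases hω : ω ∈ A
    · simpa [X, hω] using hψ_cont
    · simpa [X, hω] using continuous_const
  convert measurable_predictable_of_continuous hXa hXc (measurableSet_Ioi (a := 0)) using 1
  ext ⟨ω, t⟩
  by_cases hω : ω ∈ A <;> simp [X, hω, hψ_pos]

theorem measurableSet_predictable_lt_snd (hG : Monotone G) (u : ℝ≥0∞) :
    MeasurableSet[predictableSigmaAlgebra G] {p : Ω × ℝ≥0∞ | u < p.2} := by
  convert measurableSet_predictable_prod_Ioi hG (u := u) (A := univ) .univ using 1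
  ext
  simp

theorem measurable_predictable_ite_lt {β : Type*} [MeasurableSpace β] (hG : Monotone G)
    {u : ℝ≥0∞} {f : Ω → β} (hf : Measurable[G u] f) (c : β) :
    Measurable[predictableSigmaAlgebra G] fun p : Ω × ℝ≥0∞ => if u < p.2 then f p.1 else c := by
  intro B hB
  have hafter := measurableSet_predictable_prod_Ioi hG (hf hB)
  have hbefore := (MeasurableSet.const (c ∈ B)).diff (measurableSet_predictable_lt_snd hG u)
  convert hafter.union hbefore using 1
  ext ⟨ω, t⟩
  by_cases ht : u < t <;> simp [ht]

theorem measurable_predictable_comp_fst (hG : Monotone G) {f : Ω → ℝ} (hf : Measurable[G 0] f) :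
    Measurable[predictableSigmaAlgebra G] fun p : Ω × ℝ≥0∞ => f p.1 :=
  measurable_predictable_of_continuous (X := fun _ => f)
    (fun t => hf.mono (hG (zero_le : 0 ≤ t)) le_rfl) fun _ => continuous_const

theorem measurableSet_predictable_snd_eq_zero (hG : Monotone G) :
    MeasurableSet[predictableSigmaAlgebra G] {p : Ω × ℝ≥0∞ | p.2 = 0} := by
  convert (measurableSet_predictable_lt_snd hG 0).compl using 1
  ext
  simp [pos_iff_ne_zero]

variable {β : Type*} [CompleteLinearOrder β] [TopologicalSpace β] [OrderTopology β]
  [SecondCountableTopology β] [MeasurableSpace β] [BorelSpace β]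

theorem measurable_biSup_Ioc_univCompletion (hG : Monotone G) {ζ : ℝ≥0∞ → Ω → β}
    (hζ : Measurable[predictableSigmaAlgebra G] fun p : Ω × ℝ≥0∞ => ζ p.2 p.1) (u v : ℝ≥0∞) :
    Measurable[univCompletion (G v)] fun ω => ⨆ s ∈ Ioc u v, ζ s ω := by
  refine measurable_of_Ioi (mδ := univCompletion (G v)) fun a => ?_
  have hS : MeasurableSet[(G v).prod inferInstance]
      ((fun p : Ω × ℝ≥0∞ => (p.1, min p.2 v)) ⁻¹' {p | a < ζ p.2 p.1} ∩ univ ×ˢ Ioc u v) :=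
    (measurable_stoppedAt_predictable hG v (hζ measurableSet_Ioi)).inter
      (@MeasurableSet.prod _ _ (G v) _ _ _ MeasurableSet.univ measurableSet_Ioc)
  convert measurableSet_univCompletion_image_fst (mΩ := G v) hS using 1
  ext ω
  simp only [mem_preimage, mem_Ioi, lt_iSup_iff, exists_prop]
  constructor
  · rintro ⟨s, hs, ha⟩
    exact ⟨(ω, s), ⟨by simpa [min_eq_left hs.2] using ha, mem_univ ω, hs⟩, rfl⟩
  · rintro ⟨⟨_, s⟩, ⟨ha, -, hs⟩, rfl⟩
    exact ⟨s, hs, by simpa [min_eq_left hs.2] using ha⟩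

theorem measurable_limsup_nhdsLT_univCompletion (hG : Monotone G) {ζ : ℝ≥0∞ → Ω → β}
    (hζ : Measurable[predictableSigmaAlgebra G] fun p : Ω × ℝ≥0∞ => ζ p.2 p.1) :
    Measurable[predictableSigmaAlgebra fun t => univCompletion (G t)]
      fun p : Ω × ℝ≥0∞ => limsup (fun s => ζ s p.1) (𝓝[<] p.2) := by
  classical
  obtain ⟨D, hDc, hD⟩ := TopologicalSpace.exists_countable_dense ℝ≥0∞
  have hM : Measurable[predictableSigmaAlgebra fun t => univCompletion (G t)]
      fun p : Ω × ℝ≥0∞ =>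
        ⨅ u ∈ D, ⨅ (_ : u < p.2), ⨆ v ∈ D, ⨆ (_ : v < p.2), ⨆ s ∈ Ioc u v, ζ s p.1 := by
    refine Measurable.biInf D hDc fun u _ => ?_
    simp only [iInf_eq_if]
    refine Measurable.ite (measurableSet_predictable_lt_snd hG.univCompletion u) ?_ measurable_const
    refine Measurable.biSup D hDc fun v _ => ?_
    convert measurable_predictable_ite_lt hG.univCompletion
      (measurable_biSup_Ioc_univCompletion hG hζ u v) ⊥ using 2
    exact iSup_eq_if _
  have hlimsup (p : Ω × ℝ≥0∞) : limsup (fun s => ζ s p.1) (𝓝[<] p.2) = if 0 < p.2 then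
      ⨅ u ∈ D, ⨅ (_ : u < p.2), ⨆ v ∈ D, ⨆ (_ : v < p.2), ⨆ s ∈ Ioc u v, ζ s p.1 else ⊥ := by
    split_ifs with hp
    · exact limsup_nhdsLT_eq_iInf_iSup_Ioc hD _ ⟨0, hp⟩
    · simp [nonpos_iff_eq_zero.1 (not_lt.1 hp)]
  simp only [hlimsup]
  exact Measurable.ite (measurableSet_predictable_lt_snd hG.univCompletion 0) hM measurable_const

end Predictable

theorem leftLimsup_predictable_general {Ω : Type*}
    (G : ℝ≥0∞ → MeasurableSpace Ω) (hG_mono : Monotone G)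
    (ξ : ℝ≥0∞ → Ω → ℝ)
    (hξ : @Measurable (Ω × ℝ≥0∞) ℝ (predictableSigmaAlgebra G) _
      (fun p => ξ p.2 p.1)) :
    @Measurable (Ω × ℝ≥0∞) ℝ
      (predictableSigmaAlgebra fun t => univCompletion (G t)) _
      (fun p =>
        if p.2 = 0 then ξ 0 p.1
        else Filter.limsup (fun s => ξ s p.1) (nhdsWithin p.2 (Set.Iio p.2))) := by
  have hξ₀ : Measurable[G 0] (ξ 0) := hξ.comp (measurable_prodMk_right_predictable 0)
  have hlimsup := measurable_limsup_nhdsLT_univCompletion hG_mono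
    (ζ := fun s ω => (ξ s ω : EReal)) (measurable_coe_real_ereal.comp hξ)
  simp only [Real.limsup_eq_toReal_limsup_coe]
  exact Measurable.ite (measurableSet_predictable_snd_eq_zero hG_mono.univCompletion)
    (measurable_predictable_comp_fst hG_mono.univCompletion (hξ₀.mono (le_univCompletion _) le_rfl))
    (measurable_ereal_toReal.comp hlimsup)

/-- If `ξ = (ξ_t)_{t ∈ [0,∞]}` is predictable with respect to a filtration
`(G_t)`, then the left-limsup process `ξ̄` given by `ξ̄_0 = ξ_0` and
`ξ̄_t = limsup_{s ↑↑ t} ξ_s` for `t > 0` is predictable with respect to the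
universally completed filtration `(G^U_t)`. -/
theorem leftLimsup_predictable {Ω : Type*} {m : MeasurableSpace Ω}
    (G : ℝ≥0∞ → MeasurableSpace Ω) (hG_le : ∀ t, G t ≤ m) (hG_mono : Monotone G)
    (ξ : ℝ≥0∞ → Ω → ℝ)
    (hξ : @Measurable (Ω × ℝ≥0∞) ℝ (predictableSigmaAlgebra G) _
      (fun p => ξ p.2 p.1)) :
    @Measurable (Ω × ℝ≥0∞) ℝ
      (predictableSigmaAlgebra fun t => univCompletion (G t)) _
      (fun p =>
        if p.2 = 0 then ξ 0 p.1
        else Filter.limsup (fun s => ξ s p.1) (nhdsWithin p.2 (Set.Iio p.2))) :=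
  leftLimsup_predictable_general G hG_mono ξ hξ
end
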